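/- Fix α > 0 and let f be the function determined by 1/f(z) = (1/(2π))·[ log((z+α)/z) + (2π−α)/(z+α) ] for z in the upper half-plane, extended continuously to the real axis near 0 from above, and write f(x) = u(x) + i·v(x) for real x < 0 near 0. Then the curve traced by (u(x), v(x)) satisfies the asymptotic relation v(x) = u(x)²/2 + o(u(x)²) as x → 0⁻ (equivalently, v = u²/2 + o(u²) as u → 0⁺ along the curve). -/

import Mathlib

/-! For `-α < x < 0` the denominator of `f(x)` is `L(x) - πi` with `L = fCSDenomRe α` real,
since `log x = log (-x) + πi`.  Hence `f(x) = 2π / (L(x) - πi)` lies on the circle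
`u² + v² = 2v` and `v / u = π / L(x)`, so `v - u²/2 = v²/2 = (π / L(x))² u² / 2`.
Finally `L(x) → +∞` as `x → 0⁻` because of the term `-log (-x)`. -/

open Complex Filter Topology Asymptotics

/-- The Christoffel–Schwarz map `f` of the paper:
`1/f(z) = (1/(2π))·[log(z+α) − log z + (2π−α)/(z+α)]`, where `Complex.log`
is the branch with `log i = iπ/2` (the continuous extension to the real axis from above,
with `log((z+α)/z) = log(z+α) − log z` on the upper half-plane). -/
noncomputable def fCS (α : ℝ) (z : ℂ) : ℂ :=
  2 * (Real.pi : ℂ) /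
    (Complex.log (z + (α : ℂ)) - Complex.log z + ((2 * Real.pi - α : ℝ) : ℂ) / (z + (α : ℂ)))

namespace Complex

theorem re_two_mul_div_sub_mul_I (r L : ℝ) :
    (2 * r / (L - r * I) : ℂ).re = 2 * r * L / (L ^ 2 + r ^ 2) := by
  simp [div_re, normSq_apply, sq, mul_div_assoc, mul_assoc]

theorem im_two_mul_div_sub_mul_I (r L : ℝ) :
    (2 * r / (L - r * I) : ℂ).im = 2 * r ^ 2 / (L ^ 2 + r ^ 2) := by
  simp [div_im, normSq_apply, sq, mul_div_assoc, neg_div]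

theorem re_sq_add_im_sq_two_mul_div_sub_mul_I (r L : ℝ) :
    (2 * r / (L - r * I) : ℂ).re ^ 2 + (2 * r / (L - r * I) : ℂ).im ^ 2 =
      2 * (2 * r / (L - r * I) : ℂ).im := by
  rw [re_two_mul_div_sub_mul_I, im_two_mul_div_sub_mul_I]
  rcases eq_or_ne (L ^ 2 + r ^ 2) 0 with h | h
  · simp [h]
  · field_simp

theorem im_two_mul_div_sub_mul_I_eq_mul_re {r L : ℝ} (hL : L ≠ 0) :
    (2 * r / (L - r * I) : ℂ).im = r / L * (2 * r / (L - r * I) : ℂ).re := by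
  rw [re_two_mul_div_sub_mul_I, im_two_mul_div_sub_mul_I]
  field_simp

end Complex

noncomputable def fCSDenomRe (α x : ℝ) : ℝ :=
  Real.log (x + α) - Real.log (-x) + (2 * Real.pi - α) / (x + α)

theorem fCS_of_neg {α x : ℝ} (hx : x < 0) (hxα : 0 < x + α) :
    fCS α x = 2 * Real.pi / (fCSDenomRe α x - Real.pi * I) := by
  have hlog : Complex.log x = Real.log (-x) + Real.pi * I := by
    rw [Complex.log, Complex.norm_real, Real.norm_eq_abs, abs_of_neg hx,
      Complex.arg_ofReal_of_neg hx]
  rw [fCS, hlog, ← ofReal_add, ← ofReal_log hxα.le, fCSDenomRe]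
  push_cast
  ring

theorem tendsto_fCSDenomRe_atTop {α : ℝ} (hα : 0 < α) :
    Tendsto (fCSDenomRe α) (𝓝[<] 0) atTop := by
  have hlog : Tendsto (fun x : ℝ => -Real.log (-x)) (𝓝[<] 0) atTop := by
    simp only [Real.log_neg_eq_log]
    exact tendsto_neg_atBot_atTop.comp <|
      Real.tendsto_log_nhdsNE_zero.mono_left <| nhdsWithin_mono _ fun _ hx => ne_of_lt hx
  have hcont :
      ContinuousAt (fun x : ℝ => Real.log (x + α) + (2 * Real.pi - α) / (x + α)) 0 := by
    have : (0 : ℝ) + α ≠ 0 := by simpa using hα.ne'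
    exact ((continuousAt_id.add continuousAt_const).log this).add
      (continuousAt_const.div (continuousAt_id.add continuousAt_const) this)
  refine (hcont.tendsto.mono_left nhdsWithin_le_nhds |>.add_atTop hlog).congr fun x => ?_
  rw [fCSDenomRe]
  ring

/-- The circular arc traced by `x ↦ f(x) = u(x) + i v(x)`, `x < 0`, satisfies
`v = u²/2 + o(u²)` as `x → 0⁻`. -/
theorem stmt6 (α : ℝ) (hα : 0 < α) :
    (fun x : ℝ => (fCS α (x : ℂ)).im - ((fCS α (x : ℂ)).re) ^ 2 / 2)
      =o[nhdsWithin 0 (Set.Iio (0 : ℝ))] (fun x : ℝ => ((fCS α (x : ℂ)).re) ^ 2) := by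
  have hL := tendsto_fCSDenomRe_atTop hα
  have hnear : Set.Ioo (-α) 0 ∈ 𝓝[<] (0 : ℝ) := Ioo_mem_nhdsLT (neg_lt_zero.2 hα)
  have hcurve : ∀ᶠ x in 𝓝[<] (0 : ℝ),
      (Real.pi / fCSDenomRe α x) ^ 2 / 2 * (fCS α x).re ^ 2 =
        (fCS α x).im - (fCS α x).re ^ 2 / 2 := by
    filter_upwards [hnear, hL.eventually_ne_atTop 0] with x hx hLx
    have hcircle := re_sq_add_im_sq_two_mul_div_sub_mul_I Real.pi (fCSDenomRe α x)
    rw [fCS_of_neg hx.2 (by linarith [hx.1])]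
    rw [im_two_mul_div_sub_mul_I_eq_mul_re hLx] at hcircle ⊢
    linear_combination (1 / 2 : ℝ) * hcircle
  have hsmall : Tendsto (fun x => (Real.pi / fCSDenomRe α x) ^ 2 / 2) (𝓝[<] 0) (𝓝 0) := by
    simpa using ((tendsto_const_nhds.div_atTop hL).pow 2).div_const 2
  exact (((isLittleO_one_iff ℝ).2 hsmall).mul_isBigO (isBigO_refl _ _)).congr' hcurve
    (.of_forall fun _ => one_mul _)
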